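/- Let P be a well-behaved transition probability space. If Q₁ ⊆ Q₂ are orthoclosed subsets of P that admit finite bases of the same cardinality, then Q₁ = Q₂. -/

import Mathlib

/-!
In a well-behaved space every finite orthogonal set `F` extends (Zorn) to a maximal orthogonal
subset of `P`, which is a basis of `P`; so `∑_{ρ ∈ F} p(ρ, σ) ≤ 1` for every `σ`. Summing
`p(ρ, σ)` over `ρ ∈ F ⊆ Q₂` and `σ ∈ B₂` in both orders then gives `#F ≤ #B₂`. Hence `B₁` cannot
be enlarged inside `Q₂`: it is maximal orthogonal in `Q₂`, thus a basis of `Q₂`. Finally, for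
`τ ⊥ Q₁` the set `B₁ ∪ {τ}` is orthogonal, and for `σ ∈ Q₂` its sum `p(τ, σ) + 1` is at most
`1`; thus `τ ⊥ σ`, and `Q₂ ⊆ Q₁^⊥⊥ = Q₁`.
-/

structure TPSpace (P : Type*) where
  p : P → P → ℝ
  nonneg : ∀ ρ σ, 0 ≤ p ρ σ
  le_one : ∀ ρ σ, p ρ σ ≤ 1
  eq_one_iff : ∀ ρ σ, p ρ σ = 1 ↔ ρ = σ
  zero_iff : ∀ ρ σ, p ρ σ = 0 ↔ p σ ρ = 0

namespace TPSpace

variable {P : Type*} (T : TPSpace P)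

/-- A subset is orthogonal if `p` vanishes on all pairs of distinct points of it. -/
def IsOrthoSet (S : Set P) : Prop :=
  ∀ ρ ∈ S, ∀ σ ∈ S, ρ ≠ σ → T.p ρ σ = 0

/-- The orthoplement of a subset. -/
def orthC (Q : Set P) : Set P := {σ | ∀ ρ ∈ Q, T.p ρ σ = 0}

/-- A subset is orthoclosed if it equals its double orthoplement. -/
def IsOrthoclosed (Q : Set P) : Prop := T.orthC (T.orthC Q) = Q

/-- `B` is a basis of `Q`: it is an orthogonal subset of `Q`, and for every `σ ∈ Q`
the supremum of the finite partial sums `∑_{ρ ∈ B} p ρ σ` equals `1`. -/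
def IsBasisOf (B Q : Set P) : Prop :=
  B ⊆ Q ∧ T.IsOrthoSet B ∧
    ∀ σ ∈ Q, IsLUB {s : ℝ | ∃ F : Finset P, ↑F ⊆ B ∧ s = ∑ ρ ∈ F, T.p ρ σ} 1

/-- `S` is a maximal orthogonal subset of `Q`. -/
def MaximalOrthoIn (Q S : Set P) : Prop :=
  S ⊆ Q ∧ T.IsOrthoSet S ∧ ∀ S', S ⊆ S' → S' ⊆ Q → T.IsOrthoSet S' → S' = S

/-- A transition probability space is well-behaved if it is symmetric and every maximal
orthogonal subset of an orthoclosed subset is a basis of it. -/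
def WellBehaved : Prop :=
  (∀ ρ σ, T.p ρ σ = T.p σ ρ) ∧
    ∀ Q, T.IsOrthoclosed Q → ∀ S, T.MaximalOrthoIn Q S → T.IsBasisOf S Q

/-- The equivalence relation generated by `p ρ σ ≠ 0`. -/
def SameSector : P → P → Prop := Relation.EqvGen fun ρ σ => T.p ρ σ ≠ 0

/-- A sector is an equivalence class of `SameSector`. -/
def IsSector (C : Set P) : Prop := ∃ ρ, C = {σ | T.SameSector ρ σ}

/-- The two-sphere property: for any two distinct equivalent points `ρ, σ`, the set
`{ρ,σ}^⊥⊥` is in bijection with the unit two-sphere in `ℝ³`, in a way turning the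
transition probabilities into `p(z,w) = (1 + ⟨z,w⟩)/2`. -/
def TwoSphereProperty : Prop :=
  ∀ ρ σ : P, ρ ≠ σ → T.SameSector ρ σ →
    ∃ f : P → EuclideanSpace ℝ (Fin 3),
      Set.BijOn f (T.orthC (T.orthC {ρ, σ})) (Metric.sphere 0 1) ∧
      ∀ ρ' ∈ T.orthC (T.orthC {ρ, σ}), ∀ σ' ∈ T.orthC (T.orthC {ρ, σ}),
        T.p ρ' σ' = (1 + (inner ℝ (f ρ') (f σ') : ℝ)) / 2

end TPSpace

namespace TPSpace

variable {P : Type*} {T : TPSpace P}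

theorem notMem_orthC_of_mem {Q : Set P} {ρ : P} (hρ : ρ ∈ Q) : ρ ∉ T.orthC Q := fun h =>
  one_ne_zero (((T.eq_one_iff ρ ρ).2 rfl).symm.trans (h ρ hρ))

theorem isOrthoclosed_univ (T : TPSpace P) : T.IsOrthoclosed Set.univ := by
  have h : T.orthC Set.univ = ∅ :=
    Set.eq_empty_of_forall_notMem fun σ => notMem_orthC_of_mem (Set.mem_univ σ)
  rw [IsOrthoclosed, h]
  simp [orthC]

theorem IsOrthoSet.mono {S S' : Set P} (hS' : T.IsOrthoSet S') (h : S ⊆ S') :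
    T.IsOrthoSet S :=
  fun ρ hρ σ hσ => hS' ρ (h hρ) σ (h hσ)

theorem IsOrthoSet.insert {S : Set P} {τ : P} (hS : T.IsOrthoSet S)
    (hτ : ∀ ρ ∈ S, T.p ρ τ = 0) : T.IsOrthoSet (insert τ S) := by
  rintro ρ (rfl | hρ) σ (rfl | hσ) hne
  · exact absurd rfl hne
  · exact (T.zero_iff σ ρ).1 (hτ σ hσ)
  · exact hτ ρ hρ
  · exact hS ρ hρ σ hσ hne

theorem exists_maximalOrthoIn_superset {Q S : Set P} (hSQ : S ⊆ Q) (hS : T.IsOrthoSet S) :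
    ∃ M, S ⊆ M ∧ T.MaximalOrthoIn Q M := by
  obtain ⟨M, hSM, ⟨hMQ, hM⟩, hmax⟩ := zorn_subset_nonempty {S | S ⊆ Q ∧ T.IsOrthoSet S}
    (fun c hc hchain _ => ⟨⋃₀ c,
      ⟨Set.sUnion_subset fun s hs => (hc hs).1, fun ρ ⟨s, hs, hρ⟩ σ ⟨t, ht, hσ⟩ hne => by
        rcases hchain.total hs ht with hst | hts
        · exact (hc ht).2 ρ (hst hρ) σ hσ hne
        · exact (hc hs).2 ρ hρ σ (hts hσ) hne⟩,
      fun _ => Set.subset_sUnion_of_mem⟩) S ⟨hSQ, hS⟩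
  exact ⟨M, hSM, hMQ, hM, fun S' hMS' hS'Q hS' => (hmax ⟨hS'Q, hS'⟩ hMS').antisymm hMS'⟩

theorem IsBasisOf.sum_le_one {B Q : Set P} (hB : T.IsBasisOf B Q) {σ : P} (hσ : σ ∈ Q)
    {F : Finset P} (hF : ↑F ⊆ B) : ∑ ρ ∈ F, T.p ρ σ ≤ 1 :=
  (hB.2.2 σ hσ).1 ⟨F, hF, rfl⟩

theorem IsBasisOf.sum_eq_one {B : Finset P} {Q : Set P} (hB : T.IsBasisOf B Q) {σ : P}
    (hσ : σ ∈ Q) : ∑ ρ ∈ B, T.p ρ σ = 1 := by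
  refine (hB.sum_le_one hσ subset_rfl).antisymm ((hB.2.2 σ hσ).2 ?_)
  rintro s ⟨F, hF, rfl⟩
  exact Finset.sum_le_sum_of_subset_of_nonneg (Finset.coe_subset.1 hF)
    fun ρ _ _ => T.nonneg ρ σ

theorem WellBehaved.sum_le_one (hT : T.WellBehaved) {F : Finset P} (hF : T.IsOrthoSet F)
    (σ : P) : ∑ ρ ∈ F, T.p ρ σ ≤ 1 := by
  obtain ⟨M, hFM, hM⟩ := exists_maximalOrthoIn_superset (Set.subset_univ _) hF
  exact (hT.2 _ T.isOrthoclosed_univ M hM).sum_le_one trivial hFM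

theorem WellBehaved.card_le_of_isBasisOf (hT : T.WellBehaved) {F B : Finset P} {Q : Set P}
    (hFQ : ↑F ⊆ Q) (hF : T.IsOrthoSet F) (hB : T.IsBasisOf B Q) : F.card ≤ B.card := by
  have : (F.card : ℝ) ≤ B.card :=
    calc (F.card : ℝ) = ∑ ρ ∈ F, ∑ σ ∈ B, T.p σ ρ := by
          simp [Finset.sum_congr rfl fun ρ hρ => hB.sum_eq_one (hFQ hρ)]
      _ = ∑ σ ∈ B, ∑ ρ ∈ F, T.p ρ σ := by
          rw [Finset.sum_comm]
          simp only [hT.1]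
      _ ≤ ∑ σ ∈ B, 1 := Finset.sum_le_sum fun σ _ => hT.sum_le_one hF σ
      _ = B.card := by simp
  exact_mod_cast this

theorem WellBehaved.maximalOrthoIn_of_card_le (hT : T.WellBehaved) {F B : Finset P}
    {Q : Set P} (hFQ : ↑F ⊆ Q) (hF : T.IsOrthoSet F) (hB : T.IsBasisOf B Q)
    (hcard : B.card ≤ F.card) : T.MaximalOrthoIn Q F := by
  classical
  refine ⟨hFQ, hF, fun S hFS hSQ hS => Set.Subset.antisymm (fun τ hτ => ?_) hFS⟩
  by_contra hτF
  have hins : T.IsOrthoSet ↑(insert τ F) := by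
    rw [Finset.coe_insert]
    exact hS.mono (Set.insert_subset hτ hFS)
  have := hT.card_le_of_isBasisOf (by simpa using Set.insert_subset (hSQ hτ) hFQ) hins hB
  rw [Finset.card_insert_of_notMem hτF] at this
  omega

theorem WellBehaved.subset_of_isBasisOf (hT : T.WellBehaved) {B : Finset P} {Q Q' : Set P}
    (hB : T.IsBasisOf B Q) (hBQ' : ↑B ⊆ Q') (hQ' : T.IsOrthoclosed Q') : Q ⊆ Q' := by
  classical
  intro σ hσ
  rw [← hQ']
  intro τ hτ
  have hτB : τ ∉ B := fun hτB => notMem_orthC_of_mem (hBQ' hτB) hτ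
  have hins : T.IsOrthoSet ↑(insert τ B) := by
    rw [Finset.coe_insert]
    exact hB.2.1.insert fun ρ hρ => hτ ρ (hBQ' hρ)
  have := hT.sum_le_one hins σ
  rw [Finset.sum_insert hτB, hB.sum_eq_one hσ] at this
  linarith [T.nonneg τ σ]

end TPSpace

/-- In a well-behaved transition probability space, orthoclosed subsets `Q₁ ⊆ Q₂` with
finite bases of the same cardinality are equal. -/
theorem orthoclosed_eq_of_subset_of_card_eq {P : Type*} (T : TPSpace P)
    (hwb : T.WellBehaved)
    (Q₁ Q₂ : Set P) (hQ₁ : T.IsOrthoclosed Q₁) (hQ₂ : T.IsOrthoclosed Q₂)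
    (hsub : Q₁ ⊆ Q₂)
    (B₁ B₂ : Finset P) (hB₁ : T.IsBasisOf ↑B₁ Q₁) (hB₂ : T.IsBasisOf ↑B₂ Q₂)
    (hcard : B₁.card = B₂.card) :
    Q₁ = Q₂ := by
  have hB₁max : T.MaximalOrthoIn Q₂ B₁ :=
    hwb.maximalOrthoIn_of_card_le (hB₁.1.trans hsub) hB₁.2.1 hB₂ hcard.ge
  exact hsub.antisymm (hwb.subset_of_isBasisOf (hwb.2 Q₂ hQ₂ _ hB₁max) hB₁.1 hQ₁)
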